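/- There is an absolute constant C > 0 such that for all real x ≥ 2: #{ n : n is a positive integer, n ≤ x, and n^♭ ≤ x/(log x)^3 } ≤ C · x / log x. -/

import Mathlib

/-!
Every `n ≥ 1` is `n^♭ · s(n)` with `s(n)` squarefull, so the `n ≤ x` with `n^♭ ≤ y` are among
the products `f s` with `f ≤ y` and `s ≤ x / f` squarefull. A squarefull number is `a^3 e^2`,
so there are at most `√T ∑ a^{-3/2} ≤ 3√T` of them up to `T`. The count is therefore at most
`3√x ∑_{f ≤ y} f^{-1/2} ≤ 6√(xy)`, which for `y = x / (log x)^3` is `6x / (log x)^{3/2}`.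
-/

open Finset Real Classical

/-- A positive integer `m` is squarefull if every prime dividing it does so to order at least 2. -/
def Squarefull (m : ℕ) : Prop := ∀ p : ℕ, p.Prime → p ∣ m → p ^ 2 ∣ m

/-- `s(n)`, the largest squarefull divisor of `n`. -/
noncomputable def sfPart (n : ℕ) : ℕ := sSup {d : ℕ | d ∣ n ∧ Squarefull d}

/-- `n^♭ = n / s(n)`, the quotient of `n` by its largest squarefull divisor. -/
noncomputable def flat (n : ℕ) : ℕ := n / sfPart n

lemma squarefull_one : Squarefull 1 :=
  fun _ hp hpd => (hp.ne_one (Nat.dvd_one.1 hpd)).elim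

lemma sfPart_dvd_and_squarefull {n : ℕ} (hn : n ≠ 0) : sfPart n ∣ n ∧ Squarefull (sfPart n) :=
  Nat.sSup_mem (s := {d | d ∣ n ∧ Squarefull d}) ⟨1, one_dvd n, squarefull_one⟩
    ⟨n, fun _ hd => Nat.le_of_dvd (Nat.pos_of_ne_zero hn) hd.1⟩

lemma flat_mul_sfPart {n : ℕ} (hn : n ≠ 0) : flat n * sfPart n = n :=
  Nat.div_mul_cancel (sfPart_dvd_and_squarefull hn).1

lemma Squarefull.exists_pow_three_mul_sq_eq {m : ℕ} (hm : m ≠ 0) (h : Squarefull m) :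
    ∃ a e : ℕ, a ^ 3 * e ^ 2 = m := by
  -- in `m = b ^ 2 * a` with `a` squarefree, every prime of `a` divides `b`
  obtain ⟨a, b, hab, ha⟩ := Nat.sq_mul_squarefree m
  have hb : b ≠ 0 := by rintro rfl; simp [← hab] at hm
  suffices a ∣ b by
    obtain ⟨e, rfl⟩ := this
    exact ⟨a, e, by rw [← hab]; ring⟩
  rw [← Nat.prod_primeFactors_of_squarefree ha, Nat.prod_primeFactors_dvd_iff hb]
  intro p hpa
  have hp := Nat.prime_of_mem_primeFactors hpa
  refine Nat.mem_primeFactors.2 ⟨hp, by_contra fun hpb => ?_, hb⟩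
  have hp2m : p ^ 2 ∣ b ^ 2 * a :=
    hab ▸ h p hp (hab ▸ dvd_mul_of_dvd_right (Nat.dvd_of_mem_primeFactors hpa) _)
  have hp2a : p * p ∣ a := by
    rw [← sq]
    exact (Nat.Coprime.pow 2 2 (hp.coprime_iff_not_dvd.2 hpb)).dvd_of_dvd_mul_left hp2m
  exact hp.not_isUnit (ha p hp2a)

lemma inv_sqrt_succ_le {n : ℝ} (hn : 0 ≤ n) : (√(n + 1))⁻¹ ≤ 2 * (√(n + 1) - √n) := by
  have hs := sq_sqrt hn
  have ht := sq_sqrt (by linarith : 0 ≤ n + 1)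
  have ht0 : 0 < √(n + 1) := sqrt_pos.2 (by linarith)
  rw [inv_le_iff_one_le_mul₀ ht0]
  nlinarith [sq_nonneg (√(n + 1) - √n)]

lemma inv_mul_sqrt_succ_le {n : ℝ} (hn : 0 < n) :
    ((n + 1) * √(n + 1))⁻¹ ≤ 2 * ((√n)⁻¹ - (√(n + 1))⁻¹) := by
  have hs := sq_sqrt hn.le
  have ht := sq_sqrt (by linarith : 0 ≤ n + 1)
  have hs0 : 0 < √n := sqrt_pos.2 hn
  have ht0 : 0 < √(n + 1) := sqrt_pos.2 (by linarith)
  have hst : √n ≤ √(n + 1) := sqrt_le_sqrt (by linarith)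
  rw [show 2 * ((√n)⁻¹ - (√(n + 1))⁻¹) = 2 * (√(n + 1) - √n) / (√n * √(n + 1)) by
    field_simp, inv_eq_one_div, div_le_div_iff₀ (by positivity) (by positivity)]
  nlinarith [mul_pos hs0 ht0, mul_le_mul_of_nonneg_left hst ht0.le]

lemma sum_inv_sqrt_le (B : ℕ) : ∑ f ∈ Icc 1 B, (√(f : ℝ))⁻¹ ≤ 2 * √B := by
  induction B with
  | zero => simp
  | succ B ih =>
    rw [sum_Icc_succ_top (by omega)]
    push_cast
    linarith [inv_sqrt_succ_le (Nat.cast_nonneg (α := ℝ) B)]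

lemma sum_inv_mul_sqrt_le (B : ℕ) : ∑ b ∈ Icc 1 B, ((b : ℝ) * √b)⁻¹ ≤ 3 := by
  suffices ∀ B : ℕ, ∑ b ∈ Icc 1 (B + 1), ((b : ℝ) * √b)⁻¹ ≤ 3 - 2 * (√(B + 1 : ℝ))⁻¹ by
    rcases B with - | B
    · simp
    · linarith [this B, inv_nonneg.2 (sqrt_nonneg (B + 1 : ℝ))]
  intro B
  induction B with
  | zero => norm_num
  | succ B ih =>
    rw [sum_Icc_succ_top (by omega)]
    push_cast at ih ⊢
    linarith [inv_mul_sqrt_succ_le (by positivity : (0 : ℝ) < B + 1)]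

lemma card_Icc_one_floor_le {t : ℝ} (ht : 0 ≤ t) : (#(Icc 1 ⌊t⌋₊) : ℝ) ≤ t := by
  rw [Nat.card_Icc, Nat.add_sub_cancel]
  exact Nat.floor_le ht

lemma sqrt_div_pow_three {T a : ℝ} (hT : 0 ≤ T) (ha : 0 ≤ a) : √(T / a ^ 3) = √T * (a * √a)⁻¹ := by
  rw [sqrt_div hT, show a ^ 3 = (a * √a) ^ 2 by rw [mul_pow, sq_sqrt ha]; ring,
    sqrt_sq (by positivity), div_eq_mul_inv]

lemma card_squarefull_le {T : ℝ} (hT : 0 ≤ T) :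
    (#{m ∈ Icc 1 ⌊T⌋₊ | Squarefull m} : ℝ) ≤ 3 * √T := by
  have hsub : {m ∈ Icc 1 ⌊T⌋₊ | Squarefull m} ⊆ (Icc 1 ⌊T⌋₊).biUnion
      fun a => (Icc 1 ⌊√(T / (a : ℝ) ^ 3)⌋₊).image fun e => a ^ 3 * e ^ 2 := by
    intro m hm
    obtain ⟨⟨hm1, hmT⟩, hsf⟩ := by simpa only [mem_filter, mem_Icc] using hm
    obtain ⟨a, e, rfl⟩ := hsf.exists_pow_three_mul_sq_eq (by omega)
    have ha : 0 < a := Nat.pos_of_ne_zero (by rintro rfl; simp at hm1)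
    have he : 0 < e := Nat.pos_of_ne_zero (by rintro rfl; simp at hm1)
    have hle : ((a ^ 3 * e ^ 2 : ℕ) : ℝ) ≤ T := (Nat.cast_le.2 hmT).trans (Nat.floor_le hT)
    refine mem_biUnion.2 ⟨a, mem_Icc.2 ⟨ha, ?_⟩, mem_image.2 ⟨e, mem_Icc.2 ⟨he, ?_⟩, rfl⟩⟩
    · exact le_trans (Nat.le_self_pow (by norm_num) a) (Nat.le_mul_of_pos_right _ (by positivity))
        |>.trans hmT
    · refine Nat.le_floor (le_sqrt_of_sq_le ?_)
      rw [le_div_iff₀ (by positivity)]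
      push_cast at hle
      linarith
  calc (#{m ∈ Icc 1 ⌊T⌋₊ | Squarefull m} : ℝ)
      ≤ ∑ a ∈ Icc 1 ⌊T⌋₊, (#(Icc 1 ⌊√(T / (a : ℝ) ^ 3)⌋₊) : ℝ) := by
        exact_mod_cast (card_le_card hsub).trans
          (card_biUnion_le.trans (sum_le_sum fun _ _ => card_image_le))
    _ ≤ ∑ a ∈ Icc 1 ⌊T⌋₊, √T * ((a : ℝ) * √a)⁻¹ := by
        refine sum_le_sum fun a _ => ?_
        rw [← sqrt_div_pow_three hT a.cast_nonneg]
        exact card_Icc_one_floor_le (sqrt_nonneg _)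
    _ ≤ √T * 3 := by
        rw [← mul_sum]
        exact mul_le_mul_of_nonneg_left (sum_inv_mul_sqrt_le _) (sqrt_nonneg T)
    _ = 3 * √T := mul_comm _ _

lemma card_flat_le {x y : ℝ} (hx : 0 ≤ x) (hy : 0 ≤ y) :
    (#{n ∈ Icc 1 ⌊x⌋₊ | (flat n : ℝ) ≤ y} : ℝ) ≤ 6 * √x * √y := by
  have hsub : {n ∈ Icc 1 ⌊x⌋₊ | (flat n : ℝ) ≤ y} ⊆ (Icc 1 ⌊y⌋₊).biUnion
      fun f => {s ∈ Icc 1 ⌊x / (f : ℝ)⌋₊ | Squarefull s}.image (f * ·) := by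
    intro n hn
    obtain ⟨⟨hn1, hnx⟩, hfy⟩ := by simpa only [mem_filter, mem_Icc] using hn
    have hn0 : n ≠ 0 := by omega
    have hfs := flat_mul_sfPart hn0
    have hf : 0 < flat n := Nat.pos_of_ne_zero (by rintro h; simp [h] at hfs; omega)
    have hs : 0 < sfPart n := Nat.pos_of_ne_zero (by rintro h; simp [h] at hfs; omega)
    have hsx : (sfPart n : ℝ) ≤ x / flat n := by
      rw [le_div_iff₀ (by exact_mod_cast hf), mul_comm]
      exact_mod_cast hfs ▸ (Nat.cast_le.2 hnx).trans (Nat.floor_le hx)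
    refine mem_biUnion.2 ⟨flat n, mem_Icc.2 ⟨hf, Nat.le_floor hfy⟩, mem_image.2 ⟨sfPart n, ?_, hfs⟩⟩
    exact mem_filter.2 ⟨mem_Icc.2 ⟨hs, Nat.le_floor hsx⟩, (sfPart_dvd_and_squarefull hn0).2⟩
  calc (#{n ∈ Icc 1 ⌊x⌋₊ | (flat n : ℝ) ≤ y} : ℝ)
      ≤ ∑ f ∈ Icc 1 ⌊y⌋₊, (#{s ∈ Icc 1 ⌊x / (f : ℝ)⌋₊ | Squarefull s} : ℝ) := by
        exact_mod_cast (card_le_card hsub).trans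
          (card_biUnion_le.trans (sum_le_sum fun _ _ => card_image_le))
    _ ≤ ∑ f ∈ Icc 1 ⌊y⌋₊, 3 * √x * (√(f : ℝ))⁻¹ := by
        refine sum_le_sum fun f _ => ?_
        rw [mul_assoc, ← div_eq_mul_inv, ← sqrt_div hx]
        exact card_squarefull_le (div_nonneg hx f.cast_nonneg)
    _ ≤ 3 * √x * (2 * √y) := by
        rw [← mul_sum]
        gcongr
        exact (sum_inv_sqrt_le _).trans (by gcongr; exact Nat.floor_le hy)
    _ = 6 * √x * √y := by ring

/-- Estimate (8.1) of the paper: the number of `n ≤ x` whose squarefree-ish part `n^♭`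
is at most `x/(log x)^3` is `≪ x / log x`. -/
theorem count_small_flat_part :
    ∃ C : ℝ, 0 < C ∧
      ∀ x : ℝ, 2 ≤ x →
        (((Finset.Icc 1 ⌊x⌋₊).filter
            (fun n => (flat n : ℝ) ≤ x / Real.log x ^ 3)).card : ℝ)
          ≤ C * x / Real.log x := by
  refine ⟨12, by norm_num, fun x hx => ?_⟩
  have hx0 : 0 ≤ x := by linarith
  have hlog : 1 / 4 ≤ log x := by linarith [log_two_gt_d9, log_le_log (by norm_num) hx]
  have hL : 1 / 2 ≤ √(log x) := le_sqrt_of_sq_le (by linarith)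
  have hsqrt : √x * √(x / log x ^ 3) = x / log x / √(log x) := by
    rw [← sqrt_mul hx0, show x * (x / log x ^ 3) = (x / log x) ^ 2 / log x by field_simp,
      sqrt_div' _ (by linarith), sqrt_sq (by positivity)]
  calc _ ≤ 6 * √x * √(x / log x ^ 3) := card_flat_le hx0 (by positivity)
    _ = 6 * (x / log x / √(log x)) := by rw [mul_assoc, hsqrt]
    _ ≤ 6 * (x / log x / (1 / 2)) := by gcongr
    _ = 12 * x / log x := by ring
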